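/- Let A ∈ ℝ^{n×n}, B ∈ ℝ^{n×1}, S ∈ ℝ^{ν×ν}, L ∈ ℝ^{1×ν}, let Π ∈ ℝ^{n×ν} satisfy A·Π + B·L = Π·S and have full column rank ν, let P ∈ ℝ^{n×n} be symmetric positive definite with Aᵀ·P + P·A symmetric negative definite, and set G := (Πᵀ·P·Π)⁻¹·Πᵀ·P·B. Then (S − G·L)ᵀ·(Πᵀ·P·Π) + (Πᵀ·P·Π)·(S − G·L) is negative definite. -/

import Mathlib

open Matrix

lemma mulVec_inj_of_rank {n ν : ℕ} (Pi : Matrix (Fin n) (Fin ν) ℝ)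
    (hrank : Pi.rank = ν) : Function.Injective Pi.mulVec := by
  rw [show Pi.mulVec = Pi.mulVecLin from rfl, ← LinearMap.ker_eq_bot]
  have h := Pi.mulVecLin.finrank_range_add_finrank_ker
  rw [show (Module.finrank ℝ (LinearMap.range Pi.mulVecLin)) = Pi.rank from rfl, hrank] at h
  simp only [Module.finrank_pi, Fintype.card_fin] at h
  have : Module.finrank ℝ (LinearMap.ker Pi.mulVecLin) = 0 := by omega
  exact Submodule.finrank_eq_zero.mp this

lemma posdef_conj {n ν : ℕ} (M : Matrix (Fin n) (Fin n) ℝ) (hM : M.PosDef)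
    (Pi : Matrix (Fin n) (Fin ν) ℝ) (hinj : Function.Injective Pi.mulVec) :
    (Piᵀ * M * Pi).PosDef := by
  refine Matrix.PosDef.of_dotProduct_mulVec_pos ?_ fun x hx => ?_
  · exact Matrix.isHermitian_conjTranspose_mul_mul Pi hM.1
  · have hPix : Pi *ᵥ x ≠ 0 := fun h => hx (hinj (by simpa using h))
    have h := hM.dotProduct_mulVec_pos hPix
    simp only [star_trivial] at h ⊢
    rwa [Matrix.mul_assoc, ← Matrix.mulVec_mulVec, Matrix.dotProduct_mulVec,
      Matrix.vecMul_transpose, ← Matrix.mulVec_mulVec]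

/-- If `Π` is a full-column-rank solution of `A·Π + B·L = Π·S`, `P ≻ 0` is
symmetric with `Aᵀ·P + P·A ≺ 0`, and `G = (Πᵀ·P·Π)⁻¹·Πᵀ·P·B`, then
`(S − G·L)ᵀ·(Πᵀ·P·Π) + (Πᵀ·P·Π)·(S − G·L)` is negative definite. -/
theorem reduced_lyapunov_inequality (n ν : ℕ)
    (A : Matrix (Fin n) (Fin n) ℝ) (B : Matrix (Fin n) (Fin 1) ℝ)
    (S : Matrix (Fin ν) (Fin ν) ℝ) (L : Matrix (Fin 1) (Fin ν) ℝ)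
    (Pi : Matrix (Fin n) (Fin ν) ℝ) (hPi : A * Pi + B * L = Pi * S)
    (hrank : Pi.rank = ν)
    (P : Matrix (Fin n) (Fin n) ℝ) (hP : P.PosDef)
    (hLyap : (-(Aᵀ * P + P * A)).PosDef) :
    (-((S - ((Piᵀ * P * Pi)⁻¹ * (Piᵀ * P * B)) * L)ᵀ * (Piᵀ * P * Pi)
        + (Piᵀ * P * Pi) * (S - ((Piᵀ * P * Pi)⁻¹ * (Piᵀ * P * B)) * L))).PosDef := by
  have hinj := mulVec_inj_of_rank Pi hrank
  have hM : (Piᵀ * P * Pi).PosDef := posdef_conj P hP Pi hinj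
  have hPsymm : Pᵀ = P := hP.1.eq
  have hMsymm : (Piᵀ * P * Pi)ᵀ = Piᵀ * P * Pi := by
    rw [Matrix.transpose_mul, Matrix.transpose_mul, Matrix.transpose_transpose, hPsymm,
      ← Matrix.mul_assoc]
  have hMinv : (Piᵀ * P * Pi) * (Piᵀ * P * Pi)⁻¹ = 1 :=
    mul_nonsing_inv _ (isUnit_iff_isUnit_det _ |>.1 hM.isUnit)
  have key : (Piᵀ * P * Pi) * (S - ((Piᵀ * P * Pi)⁻¹ * (Piᵀ * P * B)) * L)
      = Piᵀ * P * A * Pi := by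
    have h1 : (Piᵀ * P * Pi) * (((Piᵀ * P * Pi)⁻¹ * (Piᵀ * P * B)) * L)
        = Piᵀ * P * B * L := by
      rw [← Matrix.mul_assoc, ← Matrix.mul_assoc, hMinv, Matrix.one_mul]
    rw [Matrix.mul_sub, h1]
    have h2 : Pi * S - B * L = A * Pi := by rw [← hPi, add_sub_cancel_right]
    calc Piᵀ * P * Pi * S - Piᵀ * P * B * L
        = Piᵀ * P * (Pi * S - B * L) := by
          rw [Matrix.mul_sub, Matrix.mul_assoc (Piᵀ * P), Matrix.mul_assoc (Piᵀ * P)]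
      _ = Piᵀ * P * A * Pi := by rw [h2, ← Matrix.mul_assoc]
  have keyT : (S - ((Piᵀ * P * Pi)⁻¹ * (Piᵀ * P * B)) * L)ᵀ * (Piᵀ * P * Pi)
      = Piᵀ * Aᵀ * P * Pi := by
    have h := congrArg Matrix.transpose key
    rw [Matrix.transpose_mul, hMsymm] at h
    rw [h, Matrix.transpose_mul, Matrix.transpose_mul, Matrix.transpose_mul,
      Matrix.transpose_transpose, hPsymm, Matrix.mul_assoc, Matrix.mul_assoc,
      ← Matrix.mul_assoc, ← Matrix.mul_assoc]
  have expr : -((S - ((Piᵀ * P * Pi)⁻¹ * (Piᵀ * P * B)) * L)ᵀ * (Piᵀ * P * Pi)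
        + (Piᵀ * P * Pi) * (S - ((Piᵀ * P * Pi)⁻¹ * (Piᵀ * P * B)) * L))
      = Piᵀ * (-(Aᵀ * P + P * A)) * Pi := by
    rw [keyT, key]
    rw [Matrix.mul_neg, Matrix.neg_mul, Matrix.mul_add, Matrix.add_mul,
      Matrix.mul_assoc Piᵀ Aᵀ P, Matrix.mul_assoc Piᵀ P A]
  rw [expr]
  exact posdef_conj _ hLyap Pi hinj
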